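/- The Nessyahu–Tadmor scheme with van Albada limiter is TVD: under the CFL condition λ·max_u|a(u)| ≤ (−1 + √(3/2 + 3√2/4))/(1+√2), the staggered update ū^{n+1}_{j+1/2} = (ū^n_j + ū^n_{j+1})/2 + (u'_j − u'_{j+1})/8 − λ[f(u^{n+1/2}_{j+1}) − f(u^{n+1/2}_j)] with u^{n+1/2}_j = ū^n_j − (λ/2)a(ū^n_j)u'_j and u'_j = ψ_vA(Δū^n_{j−1/2}, Δū^n_{j+1/2}) satisfies Σ_j|ū^{n+1}_{j+1/2} − ū^{n+1}_{j−1/2}| ≤ Σ_j|Δū^n_{j+1/2}|. -/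

import Mathlib

noncomputable def vanAlbada (a b : ℝ) : ℝ := (a ^ 2 * b + a * b ^ 2) / (a ^ 2 + b ^ 2)

/-!
Write the update as `v j = L j + R (j + 1)` with
`L = u/2 + u'/8 + λ f(u^{n+1/2})` and `R = u/2 - u'/8 - λ f(u^{n+1/2})`.
Over one cell `L` and `R` increase by `Δu/2 ± X`, where `X` collects the slope and flux
differences. The van Albada slope is within `(√2/2)|b|` of `b/2`, so
`|X| ≤ (√2/8 + ε(1 + (1+√2)/2 · ε)) |Δu|` with `ε = λM`, and the CFL condition makes this at
most `|Δu|/2`. Then `|ΔL| + |ΔR| = |Δu|` cell by cell, and the total variation of `v` is at most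
that of `L` plus that of `R`.
-/

open Real

lemma vanAlbada_comm (a b : ℝ) : vanAlbada a b = vanAlbada b a := by
  unfold vanAlbada
  ring

lemma abs_vanAlbada_sub_half_le (a b : ℝ) : |vanAlbada a b - b / 2| ≤ √2 / 2 * |b| := by
  rcases eq_or_ne b 0 with rfl | hb
  · simp [vanAlbada]
  have hpos : 0 < a ^ 2 + b ^ 2 := by positivity
  have hform : vanAlbada a b - b / 2 = b * (a ^ 2 + 2 * a * b - b ^ 2) / (2 * (a ^ 2 + b ^ 2)) := by
    unfold vanAlbada
    field_simp
    ring
  -- `2 (a² + b²)² - (a² + 2ab - b²)² = (a² - 2ab - b²)²`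
  have hnum : |a ^ 2 + 2 * a * b - b ^ 2| ≤ √2 * (a ^ 2 + b ^ 2) := by
    rw [← sqrt_sq_eq_abs, ← sqrt_sq (by positivity : 0 ≤ √2 * (a ^ 2 + b ^ 2))]
    refine sqrt_le_sqrt ?_
    nlinarith [sq_nonneg (a ^ 2 - 2 * a * b - b ^ 2), sq_sqrt (zero_le_two : (0 : ℝ) ≤ 2)]
  rw [hform, abs_div, abs_mul, abs_of_pos (by positivity : (0 : ℝ) < 2 * (a ^ 2 + b ^ 2)),
    div_le_iff₀ (by positivity)]
  nlinarith [mul_le_mul_of_nonneg_left hnum (abs_nonneg b)]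

lemma abs_vanAlbada_le (a b : ℝ) : |vanAlbada a b| ≤ (1 + √2) / 2 * |b| := by
  have h := abs_vanAlbada_sub_half_le a b
  have := abs_sub_abs_le_abs_sub (vanAlbada a b) (b / 2)
  rw [abs_div, abs_two] at this
  linarith

lemma abs_vanAlbada_sub_vanAlbada_le (a b c : ℝ) :
    |vanAlbada b c - vanAlbada a b| ≤ √2 * |b| := by
  have h₁ := abs_vanAlbada_sub_half_le a b
  have h₂ := abs_vanAlbada_sub_half_le c b
  rw [vanAlbada_comm c b] at h₂
  calc |vanAlbada b c - vanAlbada a b|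
      = |(vanAlbada b c - b / 2) - (vanAlbada a b - b / 2)| := by ring_nf
    _ ≤ |vanAlbada b c - b / 2| + |vanAlbada a b - b / 2| := abs_sub _ _
    _ ≤ √2 * |b| := by linarith

/-- The CFL number is the positive root of `ε + (1 + √2)/2 · ε² = (4 - √2)/8`. -/
lemma mul_one_add_mul_le_of_le_cfl {ε : ℝ} (h₀ : 0 ≤ ε)
    (h : ε ≤ (-1 + √(3 / 2 + 3 * √2 / 4)) / (1 + √2)) :
    ε * (1 + (1 + √2) / 2 * ε) ≤ (4 - √2) / 8 := by
  have hs₀ : 0 ≤ √2 := sqrt_nonneg 2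
  have hs₂ : √2 ^ 2 = 2 := sq_sqrt zero_le_two
  have hr₀ : 0 ≤ √(3 / 2 + 3 * √2 / 4) := sqrt_nonneg _
  have hr₂ : √(3 / 2 + 3 * √2 / 4) ^ 2 = 3 / 2 + 3 * √2 / 4 := sq_sqrt (by positivity)
  have ht : ε * (1 + √2) ≤ -1 + √(3 / 2 + 3 * √2 / 4) := (le_div_iff₀ (by positivity)).mp h
  have ht₀ : 0 ≤ ε * (1 + √2) := by positivity
  nlinarith [mul_le_mul ht ht ht₀ (ht₀.trans ht)]

lemma abs_sub_le_of_abs_deriv_le {f : ℝ → ℝ} (hf : Differentiable ℝ f) {M : ℝ}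
    (hM : ∀ x, |deriv f x| ≤ M) (x y : ℝ) : |f x - f y| ≤ M * |x - y| := by
  simpa only [Real.norm_eq_abs] using
    convex_univ.norm_image_sub_le_of_norm_deriv_le (fun z _ => hf z)
      (fun z _ => by simpa only [Real.norm_eq_abs] using hM z) (Set.mem_univ y) (Set.mem_univ x)

lemma abs_add_add_abs_sub_of_abs_le {x y : ℝ} (h : |x| ≤ |y|) : |y + x| + |y - x| = 2 * |y| := by
  obtain ⟨hx₁, hx₂⟩ := abs_le.mp h
  rcases abs_cases y with ⟨hy, _⟩ | ⟨hy, _⟩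
  · rw [abs_of_nonneg (by linarith : 0 ≤ y + x), abs_of_nonneg (by linarith : 0 ≤ y - x)]
    linarith
  · rw [abs_of_nonpos (by linarith : y + x ≤ 0), abs_of_nonpos (by linarith : y - x ≤ 0)]
    linarith

theorem tsum_abs_sub_le_of_eq_add_shift {L R v d : ℤ → ℝ} (hd : Summable d)
    (hLR : ∀ j, |L (j + 1) - L j| + |R (j + 1) - R j| ≤ d j)
    (hv : ∀ j, v j = L j + R (j + 1)) :
    ∑' j, |v j - v (j - 1)| ≤ ∑' j, d j := by
  have hL : Summable fun j => |L (j + 1) - L j| :=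
    hd.of_nonneg_of_le (fun _ => abs_nonneg _)
      fun j => (le_add_of_nonneg_right (abs_nonneg _)).trans (hLR j)
  have hR : Summable fun j => |R (j + 1) - R j| :=
    hd.of_nonneg_of_le (fun _ => abs_nonneg _)
      fun j => (le_add_of_nonneg_left (abs_nonneg _)).trans (hLR j)
  have hshift : ∀ j : ℤ, |L (j - 1 + 1) - L (j - 1)| = |L j - L (j - 1)| := by
    simp only [sub_add_cancel, implies_true]
  have hL' : Summable fun j => |L j - L (j - 1)| := by
    simpa only [Function.comp_def, Equiv.subRight_apply, hshift] using
      (Equiv.subRight (1 : ℤ)).summable_iff.mpr hL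
  have hvLR : ∀ j, |v j - v (j - 1)| ≤ |L j - L (j - 1)| + |R (j + 1) - R j| := fun j => by
    rw [hv j, hv (j - 1), sub_add_cancel]
    exact (abs_add_le _ _).trans_eq' (by ring_nf)
  calc ∑' j, |v j - v (j - 1)|
      ≤ ∑' j, (|L j - L (j - 1)| + |R (j + 1) - R j|) :=
        (hL'.add hR).of_nonneg_of_le (fun _ => abs_nonneg _) hvLR |>.tsum_le_tsum hvLR (hL'.add hR)
    _ = ∑' j, |L j - L (j - 1)| + ∑' j, |R (j + 1) - R j| := hL'.tsum_add hR
    _ = ∑' j, |L (j + 1) - L j| + ∑' j, |R (j + 1) - R j| := by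
        rw [← (Equiv.subRight (1 : ℤ)).tsum_eq fun j => |L (j + 1) - L j|]
        simp only [Equiv.subRight_apply, hshift]
    _ = ∑' j, (|L (j + 1) - L j| + |R (j + 1) - R j|) := (hL.tsum_add hR).symm
    _ ≤ ∑' j, d j := (hL.add hR).tsum_le_tsum hLR hd

/-- The van Albada slope `u'_j`. -/
noncomputable def limitedSlope (u : ℤ → ℝ) (j : ℤ) : ℝ :=
  vanAlbada (u j - u (j - 1)) (u (j + 1) - u j)

/-- The predictor value `u^{n+1/2}_j`. -/
noncomputable def midpointPredictor (f : ℝ → ℝ) (lam : ℝ) (u : ℤ → ℝ) (j : ℤ) : ℝ :=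
  u j - lam / 2 * (deriv f (u j) * limitedSlope u j)

section Scheme

variable {f : ℝ → ℝ} {M lam : ℝ} (u : ℤ → ℝ) (j : ℤ)

lemma limitedSlope_succ : limitedSlope u (j + 1) =
    vanAlbada (u (j + 1) - u j) (u (j + 1 + 1) - u (j + 1)) := by
  rw [limitedSlope, add_sub_cancel_right]

lemma abs_limitedSlope_le : |limitedSlope u j| ≤ (1 + √2) / 2 * |u (j + 1) - u j| :=
  abs_vanAlbada_le _ _

lemma abs_limitedSlope_succ_le : |limitedSlope u (j + 1)| ≤ (1 + √2) / 2 * |u (j + 1) - u j| := by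
  rw [limitedSlope_succ, vanAlbada_comm]
  exact abs_vanAlbada_le _ _

lemma abs_limitedSlope_succ_sub_le :
    |limitedSlope u (j + 1) - limitedSlope u j| ≤ √2 * |u (j + 1) - u j| := by
  rw [limitedSlope_succ, limitedSlope]
  exact abs_vanAlbada_sub_vanAlbada_le _ _ _

lemma abs_midpointPredictor_succ_sub_le (hM : ∀ x, |deriv f x| ≤ M) (hlam : 0 ≤ lam) :
    |midpointPredictor f lam u (j + 1) - midpointPredictor f lam u j|
      ≤ (1 + lam * M * ((1 + √2) / 2)) * |u (j + 1) - u j| := by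
  have hM₀ : 0 ≤ M := (abs_nonneg _).trans (hM 0)
  have hslope : ∀ i, |limitedSlope u i| ≤ (1 + √2) / 2 * |u (j + 1) - u j| →
      |deriv f (u i) * limitedSlope u i| ≤ M * ((1 + √2) / 2 * |u (j + 1) - u j|) := fun i hi => by
    rw [abs_mul]
    exact mul_le_mul (hM _) hi (abs_nonneg _) hM₀
  have h₁ := hslope _ (abs_limitedSlope_succ_le u j)
  have h₀ := hslope _ (abs_limitedSlope_le u j)
  have hlam₂ : 0 ≤ lam / 2 := by positivity
  calc |midpointPredictor f lam u (j + 1) - midpointPredictor f lam u j|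
      = |(u (j + 1) - u j) - lam / 2 * (deriv f (u (j + 1)) * limitedSlope u (j + 1))
          + lam / 2 * (deriv f (u j) * limitedSlope u j)| := by
        rw [midpointPredictor, midpointPredictor]; ring_nf
    _ ≤ |u (j + 1) - u j| + lam / 2 * |deriv f (u (j + 1)) * limitedSlope u (j + 1)|
          + lam / 2 * |deriv f (u j) * limitedSlope u j| := by
        refine (abs_add_le _ _).trans (add_le_add ((abs_sub _ _).trans_eq ?_) (le_of_eq ?_)) <;>
          simp only [abs_mul, abs_of_nonneg hlam₂]
    _ ≤ (1 + lam * M * ((1 + √2) / 2)) * |u (j + 1) - u j| := by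
        nlinarith [mul_le_mul_of_nonneg_left h₁ hlam₂, mul_le_mul_of_nonneg_left h₀ hlam₂]

noncomputable def ntCorrection (f : ℝ → ℝ) (lam : ℝ) (u : ℤ → ℝ) (j : ℤ) : ℝ :=
  (limitedSlope u (j + 1) - limitedSlope u j) / 8
    + lam * (f (midpointPredictor f lam u (j + 1)) - f (midpointPredictor f lam u j))

lemma abs_ntCorrection_le (hf : Differentiable ℝ f) (hM : ∀ x, |deriv f x| ≤ M)
    (hlam : 0 < lam)
    (hCFL : lam * M ≤ (-1 + √(3 / 2 + 3 * √2 / 4)) / (1 + √2)) :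
    |ntCorrection f lam u j| ≤ |u (j + 1) - u j| / 2 := by
  have hM₀ : 0 ≤ M := (abs_nonneg _).trans (hM 0)
  have hcfl := mul_one_add_mul_le_of_le_cfl (by positivity) hCFL
  have hflux : |f (midpointPredictor f lam u (j + 1)) - f (midpointPredictor f lam u j)|
      ≤ M * ((1 + lam * M * ((1 + √2) / 2)) * |u (j + 1) - u j|) :=
    (abs_sub_le_of_abs_deriv_le hf hM _ _).trans
      (mul_le_mul_of_nonneg_left (abs_midpointPredictor_succ_sub_le u j hM hlam.le) hM₀)
  have hslope := abs_limitedSlope_succ_sub_le u j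
  calc |ntCorrection f lam u j|
      ≤ |limitedSlope u (j + 1) - limitedSlope u j| / 8
          + lam * |f (midpointPredictor f lam u (j + 1)) - f (midpointPredictor f lam u j)| := by
        rw [ntCorrection]
        refine (abs_add_le _ _).trans_eq ?_
        rw [abs_div, abs_mul, abs_of_pos hlam, abs_of_pos (by norm_num : (0 : ℝ) < 8)]
    _ ≤ (√2 / 8 + lam * M * (1 + (1 + √2) / 2 * (lam * M))) * |u (j + 1) - u j| := by
        nlinarith [mul_le_mul_of_nonneg_left hflux hlam.le]
    _ ≤ |u (j + 1) - u j| / 2 := by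
        nlinarith [mul_le_mul_of_nonneg_right hcfl (abs_nonneg (u (j + 1) - u j))]

end Scheme

/-- `v j` is the staggered value `ū^{n+1}_{j+1/2}`. -/
theorem NT_vanAlbada_TVD (f : ℝ → ℝ) (hf : ContDiff ℝ 1 f) (M : ℝ)
    (hM : ∀ x : ℝ, |deriv f x| ≤ M)
    (lam : ℝ) (hlam : 0 < lam)
    (hCFL : lam * M ≤
      (-1 + Real.sqrt (3 / 2 + 3 * Real.sqrt 2 / 4)) / (1 + Real.sqrt 2))
    (u u' um v : ℤ → ℝ)
    (hTV : Summable fun j : ℤ => |u (j + 1) - u j|)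
    (hu' : ∀ j : ℤ, u' j = vanAlbada (u j - u (j - 1)) (u (j + 1) - u j))
    (hum : ∀ j : ℤ, um j = u j - lam / 2 * (deriv f (u j) * u' j))
    (hv : ∀ j : ℤ, v j = (u j + u (j + 1)) / 2 + (u' j - u' (j + 1)) / 8
      - lam * (f (um (j + 1)) - f (um j))) :
    ∑' j : ℤ, |v j - v (j - 1)| ≤ ∑' j : ℤ, |u (j + 1) - u j| := by
  obtain rfl : u' = limitedSlope u := funext hu'
  obtain rfl : um = midpointPredictor f lam u := funext hum
  refine tsum_abs_sub_le_of_eq_add_shift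
    (L := fun j => u j / 2 + limitedSlope u j / 8 + lam * f (midpointPredictor f lam u j))
    (R := fun j => u j / 2 - limitedSlope u j / 8 - lam * f (midpointPredictor f lam u j))
    hTV (fun j => ?_) (fun j => by rw [hv]; ring)
  set Δ := u (j + 1) - u j
  have hX := abs_ntCorrection_le u j (hf.differentiable one_ne_zero) hM hlam hCFL
  have hcell := abs_add_add_abs_sub_of_abs_le (x := ntCorrection f lam u j) (y := Δ / 2)
    (by rwa [abs_div, abs_two])
  refine le_of_eq ?_
  calc _ = |Δ / 2 + ntCorrection f lam u j| + |Δ / 2 - ntCorrection f lam u j| := by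
        congr 2 <;> rw [ntCorrection] <;> ring
    _ = |Δ| := by rw [hcell, abs_div, abs_two]; ring
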